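/- arXiv:1202.5139 — 2 statements merged into one kernel-verified Lean document; each statement's English description precedes it below -/
import Mathlib

section
/- Let {E_i} be matrices on a finite-dimensional Hilbert space with Σ_i E_i† E_i = P for an orthogonal projection P = P_A ⊗ P_B onto a tensor-product subspace. If for all i,j there exist operators B_ij on the B-factor such that P E_i† (E(P))^{-1/2} E_j P = P_A ⊗ B_ij (where E(P) = Σ_k E_k P E_k† and the inverse square root is taken on the support of E(P)), then for all i,j there exist operators B'_ij on the B-factor with P E_i† E_j P = P_A ⊗ B'_ij; explicitly one may take B'_ij = Σ_k B_ik B_kj. -/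
open Matrix
open scoped Kronecker ComplexOrder

namespace Stmt0

variable {A B K ι : Type*} [Fintype A] [Fintype B] [Fintype K] [Fintype ι]
  [DecidableEq A] [DecidableEq B] [DecidableEq K]

noncomputable def emb (M : Matrix (A × B) (A × B) ℂ) :
    Matrix ((A × B) ⊕ K) ((A × B) ⊕ K) ℂ :=
  Matrix.fromBlocks M 0 0 0

lemma emb_mul (M N : Matrix (A × B) (A × B) ℂ) :
    emb (K := K) M * emb (K := K) N = emb (K := K) (M * N) := by
  unfold emb
  rw [Matrix.fromBlocks_multiply]
  simp

noncomputable def embHom : Matrix (A × B) (A × B) ℂ →+ Matrix ((A × B) ⊕ K) ((A × B) ⊕ K) ℂ where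
  toFun := emb
  map_zero' := by unfold emb; simp [Matrix.fromBlocks_zero]
  map_add' M N := by
    unfold emb
    ext (i | i) (j | j) <;> simp [Matrix.fromBlocks]

lemma emb_sum (f : ι → Matrix (A × B) (A × B) ℂ) :
    emb (K := K) (∑ k, f k) = ∑ k, emb (K := K) (f k) :=
  map_sum (embHom (K := K)) f Finset.univ

lemma one_kron_sum (f : ι → Matrix B B ℂ) :
    (1 : Matrix A A ℂ) ⊗ₖ (∑ k, f k) = ∑ k, (1 : Matrix A A ℂ) ⊗ₖ f k := by
  ext ⟨a, b⟩ ⟨a', b'⟩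
  simp [Matrix.kroneckerMap_apply, Matrix.sum_apply, Finset.mul_sum]

/-- A matrix commuting with the square of a PSD matrix commutes with the matrix itself. -/
lemma commute_of_commute_sq {n : Type*} [Fintype n] [DecidableEq n]
    {S M : Matrix n n ℂ} (hS : S.PosSemidef) (h : M * (S * S) = (S * S) * M) :
    M * S = S * M := by
  have hH := hS.1
  set Uc : Matrix n n ℂ := (hH.eigenvectorUnitary : Matrix n n ℂ) with hUc
  set d := hH.eigenvalues with hd
  set f : n → ℂ := fun i => (d i : ℂ) with hf
  have h1 : star Uc * Uc = 1 := Unitary.coe_star_mul_self _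
  have h2 : Uc * star Uc = 1 := Unitary.coe_mul_star_self _
  have hspec : S = Uc * Matrix.diagonal f * star Uc := hH.spectral_theorem
  set N : Matrix n n ℂ := star Uc * M * Uc with hN
  have hMN : M = Uc * N * star Uc := by
    rw [hN]
    calc M = (Uc * star Uc) * M * (Uc * star Uc) := by rw [h2]; simp
    _ = Uc * (star Uc * M * Uc) * star Uc := by noncomm_ring
  have hSS : S * S = Uc * (Matrix.diagonal f * Matrix.diagonal f) * star Uc := by
    rw [hspec]
    calc (Uc * Matrix.diagonal f * star Uc) * (Uc * Matrix.diagonal f * star Uc)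
        = Uc * Matrix.diagonal f * (star Uc * Uc) * Matrix.diagonal f * star Uc := by
          noncomm_ring
      _ = Uc * (Matrix.diagonal f * Matrix.diagonal f) * star Uc := by rw [h1]; noncomm_ring
  have hkey : N * (Matrix.diagonal f * Matrix.diagonal f)
      = (Matrix.diagonal f * Matrix.diagonal f) * N := by
    have h' : star Uc * (M * (S * S)) * Uc = star Uc * ((S * S) * M) * Uc := by rw [h]
    rw [hSS, hMN] at h'
    calc N * (Matrix.diagonal f * Matrix.diagonal f)
        = (star Uc * Uc) * N * (star Uc * Uc) * (Matrix.diagonal f * Matrix.diagonal f)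
            * (star Uc * Uc) := by rw [h1]; noncomm_ring
      _ = star Uc * ((Uc * N * star Uc) * (Uc * (Matrix.diagonal f * Matrix.diagonal f) * star Uc))
            * Uc := by noncomm_ring
      _ = star Uc * ((Uc * (Matrix.diagonal f * Matrix.diagonal f) * star Uc) * (Uc * N * star Uc))
            * Uc := by rw [h']
      _ = (star Uc * Uc) * (Matrix.diagonal f * Matrix.diagonal f) * (star Uc * Uc) * N
            * (star Uc * Uc) := by noncomm_ring
      _ = (Matrix.diagonal f * Matrix.diagonal f) * N := by rw [h1]; noncomm_ring
  have hcomm : N * Matrix.diagonal f = Matrix.diagonal f * N := by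
    ext i j
    rw [Matrix.mul_diagonal, Matrix.diagonal_mul]
    have hij := congrFun (congrFun hkey i) j
    rw [Matrix.diagonal_mul_diagonal] at hij
    rw [Matrix.mul_diagonal, Matrix.diagonal_mul] at hij
    by_cases hz : N i j = 0
    · simp [hz]
    · have hmul : (f j * f j - f i * f i) * N i j = 0 := by linear_combination hij
      have hsq : f j * f j = f i * f i := by
        rcases mul_eq_zero.mp hmul with h' | h'
        · exact sub_eq_zero.mp h'
        · exact absurd h' hz
      have hdij : d j = d i := by
        have h2' : (d j : ℝ) ^ 2 = (d i : ℝ) ^ 2 := by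
          have : ((d j : ℂ)) ^ 2 = ((d i : ℂ)) ^ 2 := by rw [sq, sq]; exact hsq
          exact_mod_cast this
        have hnn := hS.eigenvalues_nonneg
        nlinarith [hnn i, hnn j]
      have hfij : f j = f i := by simp [hf, hdij]
      rw [hfij, mul_comm]
  rw [hMN, hspec]
  calc (Uc * N * star Uc) * (Uc * Matrix.diagonal f * star Uc)
      = Uc * (N * (star Uc * Uc) * Matrix.diagonal f) * star Uc := by noncomm_ring
    _ = Uc * (N * Matrix.diagonal f) * star Uc := by rw [h1]; noncomm_ring
    _ = Uc * (Matrix.diagonal f * N) * star Uc := by rw [hcomm]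
    _ = Uc * (Matrix.diagonal f * (star Uc * Uc) * N) * star Uc := by rw [h1]; noncomm_ring
    _ = (Uc * Matrix.diagonal f * star Uc) * (Uc * N * star Uc) := by noncomm_ring

/-- A finite family whose sum of `F k * (F k)ᴴ` vanishes is identically zero. -/
lemma eq_zero_of_sum_mul_conjTranspose {n m ι : Type*} [Fintype n] [Fintype m] [Fintype ι]
    (F : ι → Matrix n m ℂ) (h : ∑ k, F k * (F k)ᴴ = 0) : ∀ k, F k = 0 := by
  have ht : ∑ k, (F k * (F k)ᴴ).trace = 0 := by
    rw [← Matrix.trace_sum, h, Matrix.trace_zero]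
  have ht' : ∑ k, ∑ i, ∑ j, ((Complex.normSq (F k i j) : ℝ) : ℂ) = 0 := by
    rw [← ht]
    congr 1
    ext k
    simp only [Matrix.trace, Matrix.diag, Matrix.mul_apply, Matrix.conjTranspose_apply]
    congr 1; ext i; congr 1; ext j
    rw [Complex.star_def, Complex.mul_conj]
  have htr : ∑ k, ∑ i, ∑ j, Complex.normSq (F k i j) = 0 := by
    have := ht'
    push_cast at this
    exact_mod_cast this
  intro k
  ext i j
  have h1 : ∀ k ∈ Finset.univ, (0:ℝ) ≤ ∑ i, ∑ j, Complex.normSq (F k i j) := by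
    intro k _
    exact Finset.sum_nonneg fun i _ => Finset.sum_nonneg fun j _ => Complex.normSq_nonneg _
  have h2 := (Finset.sum_eq_zero_iff_of_nonneg h1).mp htr k (Finset.mem_univ k)
  have h3 : ∀ i ∈ Finset.univ, (0:ℝ) ≤ ∑ j, Complex.normSq (F k i j) := by
    intro i _; exact Finset.sum_nonneg fun j _ => Complex.normSq_nonneg _
  have h4 := (Finset.sum_eq_zero_iff_of_nonneg h3).mp h2 i (Finset.mem_univ i)
  have h5 : ∀ j ∈ Finset.univ, (0:ℝ) ≤ Complex.normSq (F k i j) := by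
    intro j _; exact Complex.normSq_nonneg _
  have h6 := (Finset.sum_eq_zero_iff_of_nonneg h5).mp h4 j (Finset.mem_univ j)
  simpa using Complex.normSq_eq_zero.mp h6

/-- If the transpose-channel products `P Eᵢᴴ (E(P))^{-1/2} Eⱼ P` all have the form
`P_A ⊗ B_ij`, then the ordinary Knill–Laflamme products `P Eᵢᴴ Eⱼ P` have the form
`P_A ⊗ B'_ij` with `B'_ij = Σ_k B_ik B_kj`.  The pseudoinverse square root `S` of
`M = E(P)` is specified through the Moore–Penrose axioms for `X = S²`. -/
theorem perfect_condition_implies_KL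
    (E : ι → Matrix ((A × B) ⊕ K) ((A × B) ⊕ K) ℂ)
    (P : Matrix ((A × B) ⊕ K) ((A × B) ⊕ K) ℂ)
    (hP : P = emb (K := K) (1 : Matrix (A × B) (A × B) ℂ))
    (hTP : ∑ i, (E i)ᴴ * E i = P)
    (M : Matrix ((A × B) ⊕ K) ((A × B) ⊕ K) ℂ)
    (hM : M = ∑ k, E k * P * (E k)ᴴ)
    (X S : Matrix ((A × B) ⊕ K) ((A × B) ⊕ K) ℂ)
    (hX1 : M * X * M = M) (hX2 : X * M * X = X)
    (hX3 : (M * X)ᴴ = M * X) (hX4 : (X * M)ᴴ = X * M)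
    (hS : S.PosSemidef) (hS2 : S * S = X)
    (Bmat : ι → ι → Matrix B B ℂ)
    (hB : ∀ i j, P * (E i)ᴴ * S * E j * P
        = emb (K := K) ((1 : Matrix A A ℂ) ⊗ₖ Bmat i j)) :
    ∀ i j, P * (E i)ᴴ * E j * P
        = emb (K := K) ((1 : Matrix A A ℂ) ⊗ₖ ∑ k, Bmat i k * Bmat k j) := by
  -- basic properties of P
  have hPP : P * P = P := by
    rw [hP]; unfold emb; rw [Matrix.fromBlocks_multiply]; simp
  have hPH : Pᴴ = P := by
    rw [hP]; unfold emb; rw [Matrix.fromBlocks_conjTranspose]; simp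
  -- M is Hermitian
  have hMH : Mᴴ = M := by
    rw [hM]
    rw [Matrix.conjTranspose_sum]
    refine Finset.sum_congr rfl fun k _ => ?_
    simp [Matrix.conjTranspose_mul, hPH, Matrix.mul_assoc]
  -- M commutes with X
  have hMX : M * X = X * M := by
    conv_lhs => rw [← hX3]
    rw [Matrix.conjTranspose_mul, hMH]
    rw [← hS2, Matrix.conjTranspose_mul, hS.1, Matrix.mul_assoc]
  -- M commutes with S
  have hMS : M * S = S * M :=
    commute_of_commute_sq hS (by rw [hS2]; exact hMX)
  -- key : M * X * (E j * P) = E j * P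
  have hkey : ∀ j, M * X * (E j * P) = E j * P := by
    have hzero : (1 - M * X) * M = 0 := by
      rw [sub_mul, one_mul, hX1, sub_self]
    have hsum : ∑ k, ((1 - M * X) * (E k * P)) * ((1 - M * X) * (E k * P))ᴴ = 0 := by
      have hcT : ((1 - M * X) : Matrix ((A × B) ⊕ K) ((A × B) ⊕ K) ℂ)ᴴ = 1 - M * X := by
        rw [Matrix.conjTranspose_sub, Matrix.conjTranspose_one, hX3]
      calc ∑ k, ((1 - M * X) * (E k * P)) * ((1 - M * X) * (E k * P))ᴴ
          = ∑ k, (1 - M * X) * (E k * P * (E k * P)ᴴ) * (1 - M * X) := by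
            refine Finset.sum_congr rfl fun k _ => ?_
            rw [Matrix.conjTranspose_mul, hcT]
            noncomm_ring
        _ = (1 - M * X) * (∑ k, E k * P * (E k * P)ᴴ) * (1 - M * X) := by
            rw [Finset.mul_sum, Finset.sum_mul]
        _ = (1 - M * X) * M * (1 - M * X) := by
            congr 2
            rw [hM]
            refine Finset.sum_congr rfl fun k _ => ?_
            rw [Matrix.conjTranspose_mul, hPH]
            calc E k * P * (P * (E k)ᴴ) = E k * (P * P) * (E k)ᴴ := by noncomm_ring
              _ = E k * P * (E k)ᴴ := by rw [hPP]
        _ = 0 := by rw [hzero, Matrix.zero_mul]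
    intro j
    have := eq_zero_of_sum_mul_conjTranspose _ hsum j
    have h' : (1 - M * X) * (E j * P) = 0 := this
    rw [sub_mul, one_mul, sub_eq_zero] at h'
    exact h'.symm
  intro i j
  -- rewrite RHS
  have step1 : emb (K := K) ((1 : Matrix A A ℂ) ⊗ₖ ∑ k, Bmat i k * Bmat k j)
      = ∑ k, (P * (E i)ᴴ * S * E k * P) * (P * (E k)ᴴ * S * E j * P) := by
    rw [one_kron_sum, emb_sum]
    refine Finset.sum_congr rfl fun k _ => ?_
    rw [hB, hB, emb_mul]
    congr 1
    rw [← Matrix.mul_kronecker_mul, one_mul]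
  rw [step1]
  -- collapse the sum
  have step2 : ∑ k, (P * (E i)ᴴ * S * E k * P) * (P * (E k)ᴴ * S * E j * P)
      = P * (E i)ᴴ * S * M * (S * (E j * P)) := by
    calc ∑ k, (P * (E i)ᴴ * S * E k * P) * (P * (E k)ᴴ * S * E j * P)
        = ∑ k, P * (E i)ᴴ * S * (E k * (P * P) * (E k)ᴴ) * (S * (E j * P)) := by
          refine Finset.sum_congr rfl fun k _ => ?_; noncomm_ring
      _ = ∑ k, P * (E i)ᴴ * S * (E k * P * (E k)ᴴ) * (S * (E j * P)) := by
          refine Finset.sum_congr rfl fun k _ => ?_; rw [hPP]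
      _ = P * (E i)ᴴ * S * (∑ k, E k * P * (E k)ᴴ) * (S * (E j * P)) := by
          rw [Finset.mul_sum, Finset.sum_mul]
      _ = P * (E i)ᴴ * S * M * (S * (E j * P)) := by rw [← hM]
  rw [step2]
  symm
  -- use commuting and key
  calc P * (E i)ᴴ * S * M * (S * (E j * P))
      = P * (E i)ᴴ * (M * (S * S)) * (E j * P) := by
        rw [show P * (E i)ᴴ * S * M = P * (E i)ᴴ * (M * S) by rw [hMS]; noncomm_ring]
        noncomm_ring
    _ = P * (E i)ᴴ * (M * X * (E j * P)) := by rw [hS2]; noncomm_ring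
    _ = P * (E i)ᴴ * (E j * P) := by rw [hkey]
    _ = P * (E i)ᴴ * E j * P := by noncomm_ring

end Stmt0
end

section
/- Let {E_i}_{i=1}^N be Kraus operators with Σ_i E_i† E_i = P = P_A ⊗ P_B, and suppose P E_i† (E(P))^{-1/2} E_j P = P_A ⊗ B_ij + Δ_ij for operators B_ij on H_B and operators Δ_ij on H_A ⊗ H_B, where these composite operators satisfy the trace-preservation identity Σ_ij (P_A ⊗ B_ij + Δ_ij)†(P_A ⊗ B_ij + Δ_ij) = P. Then for any unit product vector |ψ_A⟩ ⊗ |φ_B⟩, the recovered fidelity squared satisfies: ⟨ψ_A| tr_B( Σ_ij K_ij (ψ ⊗ φ) K_ij† ) |ψ_A⟩ = 1 − ⟨ψ_A, φ_B| Σ_ij Δ_ij† ((P_A − |ψ_A⟩⟨ψ_A|) ⊗ P_B) Δ_ij |ψ_A, φ_B⟩, where K_ij = P_A ⊗ B_ij + Δ_ij, ψ = |ψ_A⟩⟨ψ_A|, and φ = |φ_B⟩⟨φ_B|. -/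
open Matrix
open scoped Kronecker ComplexOrder

namespace Stmt11

/-- Partial trace over subsystem `B`. -/
noncomputable def trB {A B : Type*} [Fintype B]
    (M : Matrix (A × B) (A × B) ℂ) : Matrix A A ℂ :=
  Matrix.of fun a a' => ∑ b, M (a, b) (a', b)

section Helpers

variable {A B : Type*} [Fintype A] [Fintype B] [DecidableEq A] [DecidableEq B]

private lemma trace_mul_vecMulVec {n : Type*} [Fintype n] (N : Matrix n n ℂ) (x : n → ℂ) :
    Matrix.trace (N * Matrix.vecMulVec x (star x)) = star x ⬝ᵥ N.mulVec x := by
  simp only [Matrix.trace, Matrix.diag, Matrix.mul_apply, Matrix.vecMulVec_apply,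
    Matrix.mulVec, dotProduct, Finset.mul_sum, Pi.star_apply]
  exact Finset.sum_congr rfl fun p _ => Finset.sum_congr rfl fun q _ => by ring

private lemma trB_form (ψ : A → ℂ) (M : Matrix (A × B) (A × B) ℂ) :
    star ψ ⬝ᵥ (trB M).mulVec ψ
      = Matrix.trace ((Matrix.vecMulVec ψ (star ψ) ⊗ₖ (1 : Matrix B B ℂ)) * M) := by
  simp only [trB, Matrix.trace, Matrix.diag, Matrix.mul_apply, Matrix.mulVec,
    dotProduct, Matrix.of_apply, Matrix.vecMulVec_apply, Matrix.kroneckerMap_apply,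
    Matrix.one_apply, Fintype.sum_prod_type, Pi.star_apply, Finset.mul_sum, Finset.sum_mul,
    ite_mul, one_mul, zero_mul, mul_ite, mul_one, mul_zero, Finset.sum_ite_eq,
    Finset.sum_ite_eq', Finset.mem_univ, if_true]
  rw [Finset.sum_comm]
  refine Finset.sum_congr rfl fun a _ => ?_
  rw [Finset.sum_comm]
  exact Finset.sum_congr rfl fun b _ => Finset.sum_congr rfl fun a' _ => by ring

private lemma proj_kernel (ψ : A → ℂ) (hψ : star ψ ⬝ᵥ ψ = 1) (u : B → ℂ) :
    (((1 : Matrix A A ℂ) - Matrix.vecMulVec ψ (star ψ)) ⊗ₖ (1 : Matrix B B ℂ)).mulVec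
      (fun p => ψ p.1 * u p.2) = 0 := by
  have h1 : ∀ a, ∑ a', ((1 : Matrix A A ℂ) - Matrix.vecMulVec ψ (star ψ)) a a' * ψ a' = 0 := by
    intro a
    have h2 : ∑ a', ψ a * (star (ψ a') * ψ a') = ψ a * (star ψ ⬝ᵥ ψ) := by
      rw [← Finset.mul_sum]; rfl
    simp only [Matrix.sub_apply, Matrix.one_apply, Matrix.vecMulVec_apply, Pi.star_apply,
      sub_mul, ite_mul, one_mul, zero_mul, Finset.sum_sub_distrib, Finset.sum_ite_eq,
      Finset.mem_univ, if_true, mul_assoc, h2, hψ, mul_one, sub_self]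
  ext ⟨a, b⟩
  simp only [Matrix.mulVec, dotProduct, Matrix.kroneckerMap_apply, Pi.zero_apply,
    Fintype.sum_prod_type, Matrix.one_apply, mul_ite, mul_one, mul_zero, ite_mul, zero_mul]
  rw [Finset.sum_comm]
  calc ∑ b' : B, ∑ a' : A, (if b = b' then ((1 : Matrix A A ℂ) - Matrix.vecMulVec ψ (star ψ)) a a' * (ψ a' * u b') else 0)
      = ∑ b' : B, (if b = b' then (∑ a' : A, ((1 : Matrix A A ℂ) - Matrix.vecMulVec ψ (star ψ)) a a' * ψ a') * u b' else 0) := by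
        refine Finset.sum_congr rfl fun b' _ => ?_
        split
        · rw [Finset.sum_mul]; exact Finset.sum_congr rfl fun a' _ => by ring
        · simp
    _ = 0 := by
        rw [Finset.sum_ite_eq]
        simp only [Finset.mem_univ, if_true]
        rw [h1 a, zero_mul]

private lemma one_kron_mulVec (N : Matrix B B ℂ) (x : A → ℂ) (y : B → ℂ) :
    ((1 : Matrix A A ℂ) ⊗ₖ N).mulVec (fun p => x p.1 * y p.2)
      = fun p => x p.1 * (N.mulVec y) p.2 := by
  ext ⟨a, b⟩
  simp only [Matrix.mulVec, dotProduct, Matrix.kroneckerMap_apply, Matrix.one_apply,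
    Fintype.sum_prod_type, ite_mul, zero_mul, one_mul]
  calc ∑ x1 : A, ∑ x2 : B, (if a = x1 then N b x2 * (x x1 * y x2) else 0)
      = ∑ x1 : A, (if a = x1 then ∑ x2 : B, N b x2 * (x x1 * y x2) else 0) := by
        refine Finset.sum_congr rfl fun x1 _ => ?_
        split <;> simp
    _ = ∑ x2 : B, N b x2 * (x a * y x2) := by
        rw [Finset.sum_ite_eq, if_pos (Finset.mem_univ a)]
    _ = x a * ∑ x2 : B, N b x2 * y x2 := by
        rw [Finset.mul_sum]
        refine Finset.sum_congr rfl fun x2 _ => ?_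
        ring

private lemma R_herm (ψ : A → ℂ) :
    ((((1 : Matrix A A ℂ) - Matrix.vecMulVec ψ (star ψ)) ⊗ₖ (1 : Matrix B B ℂ)))ᴴ
      = (((1 : Matrix A A ℂ) - Matrix.vecMulVec ψ (star ψ)) ⊗ₖ (1 : Matrix B B ℂ)) := by
  ext ⟨a, b⟩ ⟨a', b'⟩
  by_cases h : a = a' <;> by_cases h2 : b = b' <;>
    simp [Matrix.conjTranspose_apply, Matrix.kroneckerMap_apply, Matrix.sub_apply,
      Matrix.one_apply, Matrix.vecMulVec_apply, h, h2, eq_comm, mul_comm, star_sub]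

private lemma prod_unit (ψ : A → ℂ) (hψ : star ψ ⬝ᵥ ψ = 1)
    (φ : B → ℂ) (hφ : star φ ⬝ᵥ φ = 1) :
    star (fun p : A × B => ψ p.1 * φ p.2) ⬝ᵥ (fun p : A × B => ψ p.1 * φ p.2) = 1 := by
  have h : star (fun p : A × B => ψ p.1 * φ p.2) ⬝ᵥ (fun p : A × B => ψ p.1 * φ p.2)
      = (star ψ ⬝ᵥ ψ) * (star φ ⬝ᵥ φ) := by
    simp only [dotProduct, Pi.star_apply, Fintype.sum_prod_type, star_mul',
      Finset.sum_mul, Finset.mul_sum]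
    rw [Finset.sum_comm]
    refine Finset.sum_congr rfl fun b _ => Finset.sum_congr rfl fun a _ => ?_
    ring
  rw [h, hψ, hφ, one_mul]

private lemma Q_eq (ψ : A → ℂ) :
    (Matrix.vecMulVec ψ (star ψ) ⊗ₖ (1 : Matrix B B ℂ))
      = 1 - (((1 : Matrix A A ℂ) - Matrix.vecMulVec ψ (star ψ)) ⊗ₖ (1 : Matrix B B ℂ)) := by
  ext ⟨a, b⟩ ⟨a', b'⟩
  by_cases h : a = a' <;> by_cases h2 : b = b' <;>
    simp [Matrix.kroneckerMap_apply, Matrix.sub_apply, Matrix.one_apply,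
      Matrix.vecMulVec_apply, h, h2, Prod.ext_iff]

private lemma sum_mulVec' {n ι : Type*} [Fintype n] [Fintype ι] (M : ι → Matrix n n ℂ)
    (v : n → ℂ) : (∑ i, M i).mulVec v = ∑ i, (M i).mulVec v := by
  ext p
  simp only [Matrix.mulVec, dotProduct, Finset.sum_apply, Matrix.sum_apply,
    Finset.sum_mul]
  rw [Finset.sum_comm]

private lemma dotProduct_sum' {n ι : Type*} [Fintype n] [Fintype ι] (w : ι → n → ℂ)
    (v : n → ℂ) : v ⬝ᵥ (∑ i, w i) = ∑ i, v ⬝ᵥ w i := by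
  simp only [dotProduct, Finset.sum_apply, Finset.mul_sum]
  rw [Finset.sum_comm]

end Helpers

/-- Fidelity-loss computation for the perturbed QEC condition: if the Kraus
operators `K_ij = P_A ⊗ B_ij + Δ_ij` of the recovered channel satisfy the
trace-preservation identity, then for any unit product vector `|ψ_A⟩ ⊗ |φ_B⟩`
the recovered fidelity squared equals
`1 − ⟨ψ_A, φ_B| Σ_ij Δ_ijᴴ ((P_A − |ψ_A⟩⟨ψ_A|) ⊗ P_B) Δ_ij |ψ_A, φ_B⟩`. -/
theorem fidelity_loss_formula {A B ι : Type*} [Fintype A] [Fintype B] [Fintype ι]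
    [DecidableEq A] [DecidableEq B]
    (Bm : ι → ι → Matrix B B ℂ) (Δ : ι → ι → Matrix (A × B) (A × B) ℂ)
    (Kop : ι → ι → Matrix (A × B) (A × B) ℂ)
    (hK : ∀ i j, Kop i j = (1 : Matrix A A ℂ) ⊗ₖ Bm i j + Δ i j)
    (hTP : ∑ i, ∑ j, (Kop i j)ᴴ * Kop i j = 1)
    (ψ : A → ℂ) (hψ : star ψ ⬝ᵥ ψ = 1)
    (φ : B → ℂ) (hφ : star φ ⬝ᵥ φ = 1)
    (v : A × B → ℂ) (hv : v = fun p => ψ p.1 * φ p.2) :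
    star ψ ⬝ᵥ (trB (∑ i, ∑ j,
        Kop i j * Matrix.vecMulVec v (star v) * (Kop i j)ᴴ)).mulVec ψ
      = 1 - star v ⬝ᵥ (∑ i, ∑ j, (Δ i j)ᴴ *
          ((((1 : Matrix A A ℂ) - Matrix.vecMulVec ψ (star ψ)) ⊗ₖ (1 : Matrix B B ℂ)) *
            Δ i j)).mulVec v := by
  set P : Matrix A A ℂ := Matrix.vecMulVec ψ (star ψ) with hP
  set R : Matrix (A × B) (A × B) ℂ := ((1 : Matrix A A ℂ) - P) ⊗ₖ (1 : Matrix B B ℂ) with hRdef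
  have hvv : star v ⬝ᵥ v = 1 := by rw [hv]; exact prod_unit ψ hψ φ hφ
  have hQ : (P ⊗ₖ (1 : Matrix B B ℂ)) = 1 - R := Q_eq ψ
  have hRH : Rᴴ = R := R_herm ψ
  -- kernel facts
  have hRC : ∀ (N : Matrix B B ℂ), (R * ((1 : Matrix A A ℂ) ⊗ₖ N)).mulVec v = 0 := by
    intro N
    rw [← Matrix.mulVec_mulVec, hv, one_kron_mulVec]
    exact proj_kernel ψ hψ _
  have hvR : ∀ (N : Matrix B B ℂ),
      star v ᵥ* (((1 : Matrix A A ℂ) ⊗ₖ N)ᴴ * R) = 0 := by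
    intro N
    rw [← Matrix.vecMul_vecMul, ← Matrix.star_mulVec, ← Matrix.conjTranspose_conjTranspose R,
      ← Matrix.star_mulVec, hRH, Matrix.mulVec_mulVec, hRC, star_zero]
  -- step 1: LHS as sum of quadratic forms
  have step1 : star ψ ⬝ᵥ (trB (∑ i, ∑ j,
        Kop i j * Matrix.vecMulVec v (star v) * (Kop i j)ᴴ)).mulVec ψ
      = ∑ i, ∑ j, star v ⬝ᵥ ((Kop i j)ᴴ * (P ⊗ₖ (1 : Matrix B B ℂ)) * Kop i j).mulVec v := by
    rw [trB_form, Finset.mul_sum, Matrix.trace_sum]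
    refine Finset.sum_congr rfl fun i _ => ?_
    rw [Finset.mul_sum, Matrix.trace_sum]
    refine Finset.sum_congr rfl fun j _ => ?_
    have e1 : (P ⊗ₖ (1 : Matrix B B ℂ)) * (Kop i j * Matrix.vecMulVec v (star v) * (Kop i j)ᴴ)
        = ((P ⊗ₖ (1 : Matrix B B ℂ)) * Kop i j * Matrix.vecMulVec v (star v)) * (Kop i j)ᴴ := by
      simp only [Matrix.mul_assoc]
    rw [e1, Matrix.trace_mul_comm]
    have e2 : (Kop i j)ᴴ * ((P ⊗ₖ (1 : Matrix B B ℂ)) * Kop i j * Matrix.vecMulVec v (star v))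
        = ((Kop i j)ᴴ * (P ⊗ₖ (1 : Matrix B B ℂ)) * Kop i j) * Matrix.vecMulVec v (star v) := by
      simp only [Matrix.mul_assoc]
    rw [e2, trace_mul_vecMulVec]
  rw [step1]
  -- step 2: split Q = 1 - R
  have per : ∀ i j, star v ⬝ᵥ ((Kop i j)ᴴ * (P ⊗ₖ (1 : Matrix B B ℂ)) * Kop i j).mulVec v
      = star v ⬝ᵥ ((Kop i j)ᴴ * Kop i j).mulVec v
        - star v ⬝ᵥ ((Kop i j)ᴴ * R * Kop i j).mulVec v := by
    intro i j
    have e : (Kop i j)ᴴ * (P ⊗ₖ (1 : Matrix B B ℂ)) * Kop i j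
        = (Kop i j)ᴴ * Kop i j - (Kop i j)ᴴ * R * Kop i j := by
      rw [hQ]; noncomm_ring
    rw [e, Matrix.sub_mulVec, dotProduct_sub]
  simp only [per, Finset.sum_sub_distrib]
  have hsum1 : ∑ i, ∑ j, star v ⬝ᵥ ((Kop i j)ᴴ * Kop i j).mulVec v = 1 := by
    have e : ∑ i, ∑ j, star v ⬝ᵥ ((Kop i j)ᴴ * Kop i j).mulVec v
        = star v ⬝ᵥ ((∑ i, ∑ j, (Kop i j)ᴴ * Kop i j).mulVec v) := by
      rw [sum_mulVec', dotProduct_sum']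
      refine Finset.sum_congr rfl fun i _ => ?_
      rw [sum_mulVec', dotProduct_sum']
    rw [e, hTP, Matrix.one_mulVec, hvv]
  have hterm : ∀ i j, star v ⬝ᵥ ((Kop i j)ᴴ * R * Kop i j).mulVec v
      = star v ⬝ᵥ ((Δ i j)ᴴ * (R * Δ i j)).mulVec v := by
    intro i j
    rw [hK i j]
    have expand : ((1 : Matrix A A ℂ) ⊗ₖ Bm i j + Δ i j)ᴴ * R * ((1 : Matrix A A ℂ) ⊗ₖ Bm i j + Δ i j)
        = ((1 : Matrix A A ℂ) ⊗ₖ Bm i j)ᴴ * (R * ((1 : Matrix A A ℂ) ⊗ₖ Bm i j))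
          + (((1 : Matrix A A ℂ) ⊗ₖ Bm i j)ᴴ * R) * Δ i j
          + ((Δ i j)ᴴ * (R * ((1 : Matrix A A ℂ) ⊗ₖ Bm i j))
          + (Δ i j)ᴴ * (R * Δ i j)) := by
      rw [Matrix.conjTranspose_add]; noncomm_ring
    rw [expand, Matrix.add_mulVec, Matrix.add_mulVec, Matrix.add_mulVec,
      dotProduct_add, dotProduct_add, dotProduct_add]
    have t1 : star v ⬝ᵥ (((1 : Matrix A A ℂ) ⊗ₖ Bm i j)ᴴ *
        (R * ((1 : Matrix A A ℂ) ⊗ₖ Bm i j))).mulVec v = 0 := by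
      rw [← Matrix.mulVec_mulVec, hRC, Matrix.mulVec_zero, dotProduct_zero]
    have t2 : star v ⬝ᵥ ((((1 : Matrix A A ℂ) ⊗ₖ Bm i j)ᴴ * R) * Δ i j).mulVec v = 0 := by
      rw [← Matrix.mulVec_mulVec, Matrix.dotProduct_mulVec, hvR, zero_dotProduct]
    have t3 : star v ⬝ᵥ ((Δ i j)ᴴ * (R * ((1 : Matrix A A ℂ) ⊗ₖ Bm i j))).mulVec v = 0 := by
      rw [← Matrix.mulVec_mulVec, hRC, Matrix.mulVec_zero, dotProduct_zero]
    rw [t1, t2, t3]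
    ring
  have hsum2 : ∑ i, ∑ j, star v ⬝ᵥ ((Kop i j)ᴴ * R * Kop i j).mulVec v
      = star v ⬝ᵥ ((∑ i, ∑ j, (Δ i j)ᴴ * (R * Δ i j)).mulVec v) := by
    rw [sum_mulVec', dotProduct_sum']
    refine Finset.sum_congr rfl fun i _ => ?_
    rw [sum_mulVec', dotProduct_sum']
    exact Finset.sum_congr rfl fun j _ => hterm i j
  rw [hsum1, hsum2]

end Stmt11
end
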